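/- arXiv:1411.7099 — 6 statements merged into one kernel-verified Lean document; each statement's English description precedes it below -/
import Mathlib

section
/- In the one-attacker setting with m = 1, 0 < m₁, 0 < m₂, m₁ + m₂ < 1, the derivative of the attacker's revenue density r₁(x) = (x² - m₁(m₂ + x)) / (m₁(x - 1)(m₂ + x)) with respect to x, evaluated at x = 0, is strictly positive. Hence there exists x > 0 in (0, m₁] with r₁(x) > 1. -/
theorem one_attacker_attack_profitable
    (m₁ m₂ : ℝ) (h1 : 0 < m₁) (h2 : 0 < m₂) (hsum : m₁ + m₂ < 1)
    (r₁ : ℝ → ℝ)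
    (hr₁ : ∀ x, r₁ x = (x ^ 2 - m₁ * (m₂ + x)) / (m₁ * (x - 1) * (m₂ + x))) :
    0 < deriv r₁ 0 ∧ ∃ x, 0 < x ∧ x ≤ m₁ ∧ 1 < r₁ x := by
  have hr : r₁ = fun x => (x ^ 2 - m₁ * (m₂ + x)) / (m₁ * (x - 1) * (m₂ + x)) :=
    funext hr₁
  constructor
  · -- derivative at 0 equals 1
    have hF : HasDerivAt (fun x : ℝ => x ^ 2 - m₁ * (m₂ + x)) (-m₁) 0 := by
      have : HasDerivAt (fun x : ℝ => x ^ 2 - m₁ * (m₂ + x)) (↑2 * (0:ℝ) ^ (2 - 1) - m₁ * 1) 0 := (hasDerivAt_pow 2 (0:ℝ)).sub (((hasDerivAt_id (0:ℝ)).const_add m₂).const_mul m₁)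
      simpa using this
    have hG : HasDerivAt (fun x : ℝ => m₁ * (x - 1) * (m₂ + x))
        (m₁ * 1 * (m₂ + 0) + m₁ * (0 - 1) * 1) 0 := by
      exact (((hasDerivAt_id (0:ℝ)).sub_const 1).const_mul m₁).mul
        ((hasDerivAt_id (0:ℝ)).const_add m₂)
    have hG0 : m₁ * (0 - 1) * (m₂ + 0) ≠ 0 := by
      have : m₁ * (0 - 1) * (m₂ + 0) = -(m₁ * m₂) := by ring
      rw [this]
      exact neg_ne_zero.mpr (by positivity)
    have hd := (hF.div hG hG0)
    rw [hr, show (fun x : ℝ => (x ^ 2 - m₁ * (m₂ + x)) / (m₁ * (x - 1) * (m₂ + x))) = ((fun x : ℝ => x ^ 2 - m₁ * (m₂ + x)) / fun x => m₁ * (x - 1) * (m₂ + x)) from rfl, hd.deriv]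
    have hnum : ((-m₁) * (m₁ * ((0:ℝ) - 1) * (m₂ + 0)) -
        ((0:ℝ) ^ 2 - m₁ * (m₂ + 0)) * (m₁ * 1 * (m₂ + 0) + m₁ * (0 - 1) * 1)) /
        (m₁ * ((0:ℝ) - 1) * (m₂ + 0)) ^ 2 = 1 := by
      field_simp
      ring
    rw [hnum]
    norm_num
  · -- pick x = m₁ m₂ / (2 (1 - m₁))
    have hm1 : m₁ < 1 := by linarith
    have h1m : (0:ℝ) < 1 - m₁ := by linarith
    set x := m₁ * m₂ / (2 * (1 - m₁)) with hx
    have hxpos : 0 < x := by positivity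
    have hxlt : x < m₁ := by
      rw [hx, div_lt_iff₀ (by positivity)]
      nlinarith
    have hx1 : x < 1 := lt_trans hxlt hm1
    refine ⟨x, hxpos, le_of_lt hxlt, ?_⟩
    rw [hr₁]
    have hDneg : m₁ * (x - 1) * (m₂ + x) < 0 := by
      have : m₁ * (x - 1) * (m₂ + x) = -(m₁ * (1 - x) * (m₂ + x)) := by ring
      rw [this, neg_lt_zero]
      have : 0 < 1 - x := by linarith
      positivity
    have key : x ^ 2 - m₁ * (m₂ + x) < m₁ * (x - 1) * (m₂ + x) := by
      have hxe : x * (2 * (1 - m₁)) = m₁ * m₂ := by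
        rw [hx]; field_simp
      have hhalf : x * (1 - m₁) = m₁ * m₂ / 2 := by linarith
      have hlt : x * (1 - m₁) < m₁ * m₂ := by
        rw [hhalf]; nlinarith [mul_pos h1 h2]
      nlinarith [mul_pos hxpos (sub_pos.mpr hlt)]
    rw [show (x ^ 2 - m₁ * (m₂ + x)) / (m₁ * (x - 1) * (m₂ + x))
        = (-(x ^ 2 - m₁ * (m₂ + x))) / (-(m₁ * (x - 1) * (m₂ + x))) by
      rw [neg_div_neg_eq]]
    rw [one_lt_div (by linarith)]
    linarith
end

section
/- In the one-attacker setting with m = 1, 0 < m₁, 0 < m₂, m₁ + m₂ < 1, and 1 - m₁ - m₁m₂ > 0, the attacker's equilibrium revenue density r̄₁ = (m₁ + (2 + m₁)m₂ + 2√(m₂²(1 - m₁ - m₁m₂))) / (m₁(1 + m₂)²) is strictly greater than 1. -/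
theorem one_attacker_equilibrium_revenue_gt_one
    (m₁ m₂ : ℝ) (h1 : 0 < m₁) (h2 : 0 < m₂) (hsum : m₁ + m₂ < 1)
    (hdisc : 0 < 1 - m₁ - m₁ * m₂)
    (r₁bar : ℝ)
    (hr : r₁bar = (m₁ + (2 + m₁) * m₂ + 2 * Real.sqrt (m₂ ^ 2 * (1 - m₁ - m₁ * m₂))) /
      (m₁ * (1 + m₂) ^ 2)) :
    1 < r₁bar := by
  rw [hr]
  have hden : 0 < m₁ * (1 + m₂) ^ 2 := by positivity
  rw [lt_div_iff₀ hden]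
  have hs := Real.sqrt_nonneg (m₂ ^ 2 * (1 - m₁ - m₁ * m₂))
  nlinarith [mul_pos h2 hdisc]
end

section
/- In the p identical pools setting, the symmetric value x̄ = (p - m_i - √((m_i - p)² - 4m_i²(p-1)²p)) / (2(p-1)²p) is real and satisfies 0 < x̄ < m_i/(p-1), provided p ≥ 2, 0 < m_i, p·m_i < 1, and (m_i - p)² ≥ 4m_i²(p-1)²p. -/
theorem symmetric_equilibrium_rate_feasible
    (p : ℕ) (hp : 2 ≤ p) (mi : ℝ) (hmi : 0 < mi) (htot : (p : ℝ) * mi < 1)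
    (hdisc : 4 * mi ^ 2 * ((p : ℝ) - 1) ^ 2 * p ≤ (mi - (p : ℝ)) ^ 2)
    (xbar : ℝ)
    (hxbar : xbar = ((p : ℝ) - mi -
        Real.sqrt ((mi - (p : ℝ)) ^ 2 - 4 * mi ^ 2 * ((p : ℝ) - 1) ^ 2 * p)) /
      (2 * ((p : ℝ) - 1) ^ 2 * p)) :
    0 < xbar ∧ xbar < mi / ((p : ℝ) - 1) := by
  have hP : (2 : ℝ) ≤ (p : ℝ) := by exact_mod_cast hp
  set P : ℝ := (p : ℝ) with hPdef
  set D : ℝ := (mi - P) ^ 2 - 4 * mi ^ 2 * (P - 1) ^ 2 * P with hDdef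
  have hD0 : 0 ≤ D := by simp only [hDdef]; linarith
  set s : ℝ := Real.sqrt D with hsdef
  have hs0 : 0 ≤ s := Real.sqrt_nonneg _
  have hs2 : s ^ 2 = D := Real.sq_sqrt hD0
  have hmiP : mi < 1 := by nlinarith
  have hPm : 0 < P - mi := by linarith
  have hP1 : 0 < P - 1 := by linarith
  have hdenom : 0 < 2 * (P - 1) ^ 2 * P := by positivity
  -- s < P - mi
  have hslt : s < P - mi := by
    have h1 : D < (P - mi) ^ 2 := by
      have : 0 < 4 * mi ^ 2 * (P - 1) ^ 2 * P := by positivity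
      nlinarith [sq_nonneg (mi - P)]
    nlinarith [hs2, hs0]
  -- s > P - mi - 2*P*(P-1)*mi
  have hsgt : P - mi - 2 * P * (P - 1) * mi < s := by
    set t : ℝ := P - mi - 2 * P * (P - 1) * mi with htdef
    have ht2 : t ^ 2 < D := by
      simp only [htdef, hDdef]
      nlinarith [mul_pos (mul_pos (mul_pos (by positivity : (0:ℝ) < 4 * P ^ 2) hP1) hmi) (by linarith : (0:ℝ) < 1 - P * mi)]
    have habs : |t| < s := by
      rw [hsdef, ← Real.sqrt_sq_eq_abs]
      exact Real.sqrt_lt_sqrt (sq_nonneg t) ht2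
    calc t ≤ |t| := le_abs_self t
    _ < s := habs
  constructor
  · rw [hxbar]
    exact div_pos (by linarith) hdenom
  · rw [hxbar, div_lt_div_iff₀ hdenom hP1]
    nlinarith [mul_lt_mul_of_pos_right hsgt hP1]
end

section
/- In the p identical pools symmetric equilibrium, the equilibrium revenue density r̄ = 2p / (p - m_i + 2m_i p + √((m_i - p)² - 4m_i²(p-1)²p)) is strictly less than 1, provided p ≥ 2, 0 < m_i, p·m_i < 1, and the discriminant (m_i - p)² - 4m_i²(p-1)²p is positive. -/
theorem symmetric_equilibrium_revenue_lt_one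
    (p : ℕ) (hp : 2 ≤ p) (mi : ℝ) (hmi : 0 < mi) (htot : (p : ℝ) * mi < 1)
    (hdisc : 0 < (mi - (p : ℝ)) ^ 2 - 4 * mi ^ 2 * ((p : ℝ) - 1) ^ 2 * p)
    (rbar : ℝ)
    (hrbar : rbar = 2 * (p : ℝ) /
      ((p : ℝ) - mi + 2 * mi * p +
        Real.sqrt ((mi - (p : ℝ)) ^ 2 - 4 * mi ^ 2 * ((p : ℝ) - 1) ^ 2 * p))) :
    rbar < 1 := by
  have hp1 : (2:ℝ) ≤ (p:ℝ) := by exact_mod_cast hp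
  set D : ℝ := (mi - (p : ℝ)) ^ 2 - 4 * mi ^ 2 * ((p : ℝ) - 1) ^ 2 * p with hD
  have hs : 0 < (p:ℝ) + mi - 2 * mi * p := by nlinarith
  have hlt : (p:ℝ) + mi - 2 * mi * p < Real.sqrt D := by
    rw [show ((p:ℝ) + mi - 2 * mi * p) = Real.sqrt (((p:ℝ) + mi - 2 * mi * p)^2) from
      (Real.sqrt_sq hs.le).symm]
    apply Real.sqrt_lt_sqrt (by positivity)
    nlinarith [mul_pos hmi (sub_pos.mpr htot), mul_pos (mul_pos hmi (sub_pos.mpr htot)) (by nlinarith : (0:ℝ) < (p:ℝ) - 1)]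
  have hden : 2 * (p:ℝ) < (p:ℝ) - mi + 2 * mi * p + Real.sqrt D := by linarith
  rw [hrbar, div_lt_one (by linarith)]
  linarith
end

section
/- In the p identical pools symmetric setting with all infiltration rates equal to x (each pool attacks each other pool with rate x), the common revenue density is r(x) = (m_i - (p-1)x) / ((1 - (p-1)p·x)·(m_i + (p-1)x)), and r is strictly decreasing in x on [0, m_i/(p-1)) ∩ [0, 1/((p-1)p)) when p ≥ 2 and 0 < p·m_i < 1. -/
theorem symmetric_revenue_strictly_decreasing
    (p : ℕ) (hp : 2 ≤ p) (mi : ℝ) (hmi : 0 < mi) (htot : (p : ℝ) * mi < 1)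
    (r : ℝ → ℝ)
    (hr : ∀ x, r x = (mi - ((p : ℝ) - 1) * x) /
      ((1 - ((p : ℝ) - 1) * p * x) * (mi + ((p : ℝ) - 1) * x))) :
    StrictAntiOn r
      (Set.Ico (0 : ℝ) (mi / ((p : ℝ) - 1)) ∩
        Set.Ico (0 : ℝ) (1 / (((p : ℝ) - 1) * p))) := by
  have hp2 : (2 : ℝ) ≤ (p : ℝ) := by exact_mod_cast hp
  have hq : (1 : ℝ) ≤ (p : ℝ) - 1 := by linarith
  have hqpos : (0 : ℝ) < (p : ℝ) - 1 := by linarith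
  have hppos : (0 : ℝ) < (p : ℝ) := by linarith
  have hqp : (0 : ℝ) < ((p : ℝ) - 1) * p := by positivity
  intro a ha b hb hab
  obtain ⟨⟨ha0, ha1⟩, ⟨_, ha2⟩⟩ := ha
  obtain ⟨⟨hb0, hb1⟩, ⟨_, hb2⟩⟩ := hb
  have hma : 0 < mi - ((p : ℝ) - 1) * a := by
    have := (lt_div_iff₀ hqpos).mp ha1; linarith [mul_comm a ((p : ℝ) - 1)]
  have hmb : 0 < mi - ((p : ℝ) - 1) * b := by
    have := (lt_div_iff₀ hqpos).mp hb1; linarith [mul_comm b ((p : ℝ) - 1)]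
  have hda : 0 < 1 - ((p : ℝ) - 1) * (p : ℝ) * a := by
    have := (lt_div_iff₀ hqp).mp ha2; linarith [mul_comm a (((p : ℝ) - 1) * (p : ℝ))]
  have hdb : 0 < 1 - ((p : ℝ) - 1) * (p : ℝ) * b := by
    have := (lt_div_iff₀ hqp).mp hb2; linarith [mul_comm b (((p : ℝ) - 1) * (p : ℝ))]
  have hsa : 0 < mi + ((p : ℝ) - 1) * a := by nlinarith
  have hsb : 0 < mi + ((p : ℝ) - 1) * b := by nlinarith
  rw [hr a, hr b]
  rw [div_lt_div_iff₀ (by positivity) (by positivity)]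
  set q : ℝ := (p : ℝ) - 1 with hqdef
  have h1 : mi - q * a ≤ mi * (1 - q * (p : ℝ) * a) := by nlinarith [mul_nonneg (mul_nonneg hqpos.le ha0) (sub_pos.mpr htot).le]
  have h2 : (p : ℝ) * (mi + q * b) < 2 := by nlinarith
  have key : (p : ℝ) * ((mi - q * a) * (mi + q * b)) < 2 * mi * (1 - q * (p : ℝ) * a) := by
    nlinarith [mul_pos hda hsb, mul_le_mul_of_nonneg_right h1 hsb.le]
  nlinarith [mul_pos (mul_pos hqpos (sub_pos.mpr hab)) (sub_pos.mpr key)]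
end

section
/- In the one-attacker setting with m = 1, the attacker's revenue density r₁(x) = (x² - m₁(m₂ + x))/(m₁(x - 1)(m₂ + x)) is strictly concave in x on the interval [0, m₁], assuming 0 < m₁, 0 < m₂, m₁ + m₂ < 1. -/
theorem one_attacker_revenue_strictly_concave
    (m₁ m₂ : ℝ) (h1 : 0 < m₁) (h2 : 0 < m₂) (hsum : m₁ + m₂ < 1) :
    StrictConcaveOn ℝ (Set.Icc 0 m₁)
      (fun x => (x ^ 2 - m₁ * (m₂ + x)) / (m₁ * (x - 1) * (m₂ + x))) := by
  have hm1 : m₁ < 1 := by linarith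
  have hm2 : (0:ℝ) < 1 + m₂ := by linarith
  set c₁ : ℝ := (1 - m₁ - m₁ * m₂) / (m₁ * (1 + m₂)) with hc₁
  set c₂ : ℝ := -(m₂ ^ 2) / (m₁ * (1 + m₂)) with hc₂
  have hc₁pos : 0 < c₁ := by
    apply div_pos (by nlinarith) (by positivity)
  have hc₂neg : c₂ < 0 := by
    apply div_neg_of_neg_of_pos (by nlinarith) (by positivity)
  set f : ℝ → ℝ := fun x => (x ^ 2 - m₁ * (m₂ + x)) / (m₁ * (x - 1) * (m₂ + x)) with hf
  set g : ℝ → ℝ := fun x => 1 / m₁ + c₁ * (x - 1)⁻¹ + c₂ * (x + m₂)⁻¹ with hg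
  set g1 : ℝ → ℝ := fun x => c₁ * (-1 / (x - 1) ^ 2) + c₂ * (-1 / (x + m₂) ^ 2) with hg1
  have hUopen : IsOpen (Set.Ioo (-m₂) (1:ℝ)) := isOpen_Ioo
  have hsub : Set.Icc (0:ℝ) m₁ ⊆ Set.Ioo (-m₂) 1 := by
    intro x hx
    exact ⟨by linarith [hx.1], by linarith [hx.2]⟩
  have hEq : ∀ x ∈ Set.Ioo (-m₂) (1:ℝ), f x = g x := by
    intro x hx
    have hx1 : x - 1 ≠ 0 := by intro h; have := sub_eq_zero.mp h; linarith [hx.2]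
    have hx2 : x + m₂ ≠ 0 := by intro h; nlinarith [hx.1]
    have hx2' : m₂ + x ≠ 0 := by rw [add_comm]; exact hx2
    simp only [hf, hg, hc₁, hc₂]
    field_simp
    ring
  -- first derivative of g on U
  have hgderiv : ∀ x ∈ Set.Ioo (-m₂) (1:ℝ), HasDerivAt g (g1 x) x := by
    intro x hx
    have hx1 : x - 1 ≠ 0 := by intro h; have := sub_eq_zero.mp h; linarith [hx.2]
    have hx2 : x + m₂ ≠ 0 := by intro h; nlinarith [hx.1]
    have h₁ : HasDerivAt (fun x : ℝ => (x - 1)⁻¹) (-1 / (x - 1) ^ 2) x := by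
      have h0 := ((hasDerivAt_id x).sub_const 1).inv hx1
      simp at h0
      exact h0
    have h₂ : HasDerivAt (fun x : ℝ => (x + m₂)⁻¹) (-1 / (x + m₂) ^ 2) x := by
      have h0 := ((hasDerivAt_id x).add_const m₂).inv hx2
      simp at h0
      exact h0
    have h := ((hasDerivAt_const x (1 / m₁)).add (h₁.const_mul c₁)).add (h₂.const_mul c₂)
    simp only [hg1, zero_add] at h
    exact h
  -- second derivative candidate
  have hg1deriv : ∀ x ∈ Set.Ioo (-m₂) (1:ℝ),
      HasDerivAt g1 (c₁ * (2 * (x - 1) / ((x - 1) ^ 2) ^ 2)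
        + c₂ * (2 * (x + m₂) / ((x + m₂) ^ 2) ^ 2)) x := by
    intro x hx
    have hx1 : x - 1 ≠ 0 := by intro h; have := sub_eq_zero.mp h; linarith [hx.2]
    have hx2 : x + m₂ ≠ 0 := by intro h; nlinarith [hx.1]
    have h₁ : HasDerivAt (fun x : ℝ => (x - 1) ^ 2) (2 * (x - 1)) x := by
      have := ((hasDerivAt_id x).sub_const 1).pow 2
      simp at this
      exact this
    have h₂ : HasDerivAt (fun x : ℝ => (x + m₂) ^ 2) (2 * (x + m₂)) x := by
      have := ((hasDerivAt_id x).add_const m₂).pow 2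
      simp at this
      exact this
    have h₁' := ((h₁.inv (pow_ne_zero 2 hx1)).neg.const_mul c₁)
    have h₂' := ((h₂.inv (pow_ne_zero 2 hx2)).neg.const_mul c₂)
    have hsum' := h₁'.add h₂'
    have hgfun : g1 = fun x => c₁ * -((x - 1) ^ 2)⁻¹ + c₂ * -((x + m₂) ^ 2)⁻¹ := by
      funext y
      simp only [hg1]
      ring
    rw [hgfun]
    exact hsum'.congr_deriv (by ring)
  apply strictConcaveOn_of_deriv2_neg (convex_Icc 0 m₁)
  · -- continuity
    have hgcont : ContinuousOn g (Set.Icc 0 m₁) := by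
      have hc1 : ContinuousOn (fun x : ℝ => c₁ * (x - 1)⁻¹) (Set.Icc 0 m₁) := by
        apply continuousOn_const.mul
        apply ContinuousOn.inv₀ (by fun_prop)
        intro x hx
        have := (hsub hx).2
        intro h
        have := sub_eq_zero.mp h
        linarith
      have hc2 : ContinuousOn (fun x : ℝ => c₂ * (x + m₂)⁻¹) (Set.Icc 0 m₁) := by
        apply continuousOn_const.mul
        apply ContinuousOn.inv₀ (by fun_prop)
        intro x hx
        have := (hsub hx).1
        intro h
        nlinarith
      exact (continuousOn_const.add hc1).add hc2
    exact ContinuousOn.congr hgcont (fun x hx => hEq x (hsub hx))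
  · intro x hx
    rw [interior_Icc] at hx
    have hxU : x ∈ Set.Ioo (-m₂) (1:ℝ) := ⟨by linarith [hx.1], by linarith [hx.2]⟩
    have hmem : Set.Ioo (-m₂) (1:ℝ) ∈ nhds x := hUopen.mem_nhds hxU
    have hfg : f =ᶠ[nhds x] g := Filter.eventuallyEq_of_mem hmem hEq
    have hdfg : deriv f =ᶠ[nhds x] deriv g := hfg.deriv
    have hdg : deriv g =ᶠ[nhds x] g1 :=
      Filter.eventuallyEq_of_mem hmem (fun y hy => (hgderiv y hy).deriv)
    have hdf : deriv f =ᶠ[nhds x] g1 := hdfg.trans hdg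
    have h2nd : deriv (deriv f) x = deriv g1 x := (hdf.deriv).eq_of_nhds
    have hkey : deriv g1 x = c₁ * (2 * (x - 1) / ((x - 1) ^ 2) ^ 2)
        + c₂ * (2 * (x + m₂) / ((x + m₂) ^ 2) ^ 2) := (hg1deriv x hxU).deriv
    show deriv^[2] f x < 0
    rw [Function.iterate_succ, Function.iterate_one, Function.comp_apply, h2nd, hkey]
    have hx1 : x - 1 < 0 := by linarith [hxU.2]
    have hx2 : 0 < x + m₂ := by linarith [hxU.1]
    have d1 : (0:ℝ) < ((x - 1) ^ 2) ^ 2 := by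
      apply pow_pos
      nlinarith
    have d2 : (0:ℝ) < ((x + m₂) ^ 2) ^ 2 := by
      apply pow_pos
      nlinarith
    have t1 : c₁ * (2 * (x - 1) / ((x - 1) ^ 2) ^ 2) < 0 := by
      apply mul_neg_of_pos_of_neg hc₁pos
      exact div_neg_of_neg_of_pos (by linarith) d1
    have t2 : c₂ * (2 * (x + m₂) / ((x + m₂) ^ 2) ^ 2) < 0 := by
      apply mul_neg_of_neg_of_pos hc₂neg
      exact div_pos (by linarith) d2
    linarith
end
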